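/- arXiv:1803.01665 — 2 statements merged into one kernel-verified Lean document; each statement's English description precedes it below -/
import Mathlib

section
/- If b_K < ∞, then for each γ ∈ (0,1), (b_K − w)·Q_γ(w) → −ς² log(γ) as w increases to b_K along T. -/
/-!
Since Gaussian densities with different means have monotone likelihood ratio, the truncated cdf
`θ ↦ F^T_θ(w)` is antitone, so `Q_γ(w)` is located by evaluating `F^T` at the trial means
`θ = c / (b_K - w)`. Writing `d = b_K - w`, translation gives `P_θ(V ≤ w) = P_{θ+d}(V ≤ b_K)`, and
the likelihood ratio `exp (d (2x - 2θ - d) / (2ς²))` of `N(θ + d, ς²)` to `N(θ, ς²)` tends to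
`exp (-c/ς²)` uniformly on each bounded window below `b_K`; such a window carries almost all of the
mass `P_θ(V ≤ b_K)` as `θ → ∞`, and so does `T`. Hence `F^T_{c/(b_K - w)}(w) → exp (-c/ς²)`, which
is `> γ` for `c < -ς² log γ` and `< γ` for `c > -ς² log γ`.
-/

open Filter MeasureTheory ProbabilityTheory Set

/-- The cdf of the normal distribution with mean `θ` and variance `ς²`, truncated to the
set `T`: `F^T_{θ,ς²}(w) = P(V ≤ w ∧ V ∈ T) / P(V ∈ T)` for `V ~ N(θ, ς²)`. -/
noncomputable def truncNormalCDF (ς : ℝ) (T : Set ℝ) (θ w : ℝ) : ℝ :=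
  ((gaussianReal θ (Real.toNNReal (ς ^ 2))) (Set.Iic w ∩ T)).toReal /
    ((gaussianReal θ (Real.toNNReal (ς ^ 2))) T).toReal

open Real NNReal Topology

namespace MeasureTheory

lemma measureReal_Ioc_eq_sub {μ : Measure ℝ} [IsFiniteMeasure μ] {a b : ℝ}
    (h : a ≤ b) : μ.real (Ioc a b) = μ.real (Iic b) - μ.real (Iic a) := by
  rw [← Iic_union_Ioc_eq_Iic h, measureReal_union (Iic_disjoint_Ioc le_rfl) measurableSet_Ioc]
  ring

lemma tendsto_measureReal_div_Iic_of_Ioo_subset {α : Type*} {l : Filter α}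
    {μ : α → Measure ℝ} [∀ x, IsFiniteMeasure (μ x)] [∀ x, NullSingletonClass (μ x)]
    {S : α → Set ℝ} {s : α → ℝ} {q t ρ : ℝ}
    (hS : ∀ᶠ x in l, q ≤ s x ∧ Ioo q (s x) ⊆ S x ∧ S x ⊆ Iic (s x))
    (hs : Tendsto (fun x => (μ x).real (Iic (s x)) / (μ x).real (Iic t)) l (𝓝 ρ))
    (hq : Tendsto (fun x => (μ x).real (Iic q) / (μ x).real (Iic t)) l (𝓝 0)) :
    Tendsto (fun x => (μ x).real (S x) / (μ x).real (Iic t)) l (𝓝 ρ) := by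
  have hlower := hs.sub hq
  rw [sub_zero] at hlower
  refine tendsto_of_tendsto_of_tendsto_of_le_of_le' hlower hs ?_ ?_ <;>
    filter_upwards [hS] with x ⟨hqs, hIoo, hIic⟩
  · rw [div_sub_div_same, ← measureReal_Ioc_eq_sub hqs, ← measureReal_congr Ioo_ae_eq_Ioc]
    exact div_le_div_of_nonneg_right (measureReal_mono hIoo) measureReal_nonneg
  · exact div_le_div_of_nonneg_right (measureReal_mono hIic) measureReal_nonneg

end MeasureTheory

namespace ProbabilityTheory

variable {v : ℝ≥0}

section LikelihoodRatio

noncomputable def gaussianLogLR (v : ℝ≥0) (θ₁ θ₂ x : ℝ) : ℝ :=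
  (θ₂ - θ₁) * (2 * x - θ₁ - θ₂) / (2 * v)

lemma monotone_gaussianLogLR {θ₁ θ₂ : ℝ} (h : θ₁ ≤ θ₂) : Monotone (gaussianLogLR v θ₁ θ₂) := by
  intro x y hxy
  unfold gaussianLogLR
  gcongr

lemma gaussianPDFReal_eq_mul_exp (θ₁ θ₂ x : ℝ) :
    gaussianPDFReal θ₂ v x = gaussianPDFReal θ₁ v x * exp (gaussianLogLR v θ₁ θ₂ x) := by
  rcases eq_or_ne v 0 with rfl | hv
  · simp
  rw [gaussianPDFReal, gaussianPDFReal, gaussianLogLR, mul_assoc _ (exp _), ← exp_add]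
  congr 2
  have : (v : ℝ) ≠ 0 := by exact_mod_cast hv
  field_simp
  ring

lemma gaussianReal_real_eq_setIntegral (θ : ℝ) (hv : v ≠ 0) (s : Set ℝ) :
    (gaussianReal θ v).real s = ∫ x in s, gaussianPDFReal θ v x := by
  rw [measureReal_def, gaussianReal_apply_eq_integral _ hv,
    ENNReal.toReal_ofReal (setIntegral_nonneg_of_ae (ae_of_all _ (gaussianPDFReal_nonneg _ _)))]

variable {θ₁ θ₂ w : ℝ} {s : Set ℝ}

lemma gaussianReal_real_le_exp_mul_of_subset_Iic (hv : v ≠ 0) (h : θ₁ ≤ θ₂)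
    (hs : MeasurableSet s) (hsw : s ⊆ Iic w) :
    (gaussianReal θ₂ v).real s ≤ exp (gaussianLogLR v θ₁ θ₂ w) * (gaussianReal θ₁ v).real s := by
  simp only [gaussianReal_real_eq_setIntegral _ hv, ← integral_const_mul]
  refine setIntegral_mono_on (integrable_gaussianPDFReal _ _).integrableOn
    ((integrable_gaussianPDFReal _ _).integrableOn.const_mul _) hs fun x hx => ?_
  rw [gaussianPDFReal_eq_mul_exp θ₁, mul_comm]
  gcongr
  · exact gaussianPDFReal_nonneg _ _ _
  · exact monotone_gaussianLogLR h (hsw hx)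

lemma exp_mul_le_gaussianReal_real_of_subset_Ici (hv : v ≠ 0) (h : θ₁ ≤ θ₂)
    (hs : MeasurableSet s) (hsw : s ⊆ Ici w) :
    exp (gaussianLogLR v θ₁ θ₂ w) * (gaussianReal θ₁ v).real s ≤ (gaussianReal θ₂ v).real s := by
  simp only [gaussianReal_real_eq_setIntegral _ hv, ← integral_const_mul]
  refine setIntegral_mono_on ((integrable_gaussianPDFReal _ _).integrableOn.const_mul _)
    (integrable_gaussianPDFReal _ _).integrableOn hs fun x hx => ?_
  rw [gaussianPDFReal_eq_mul_exp θ₁ θ₂ x, mul_comm]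
  gcongr
  · exact gaussianPDFReal_nonneg _ _ _
  · exact monotone_gaussianLogLR h (hsw hx)

lemma gaussianReal_real_mul_le_mul (hv : v ≠ 0) (h : θ₁ ≤ θ₂) {s t : Set ℝ}
    (hs : MeasurableSet s) (hsw : s ⊆ Iic w) (ht : MeasurableSet t) (htw : t ⊆ Ici w) :
    (gaussianReal θ₁ v).real t * (gaussianReal θ₂ v).real s ≤
      (gaussianReal θ₂ v).real t * (gaussianReal θ₁ v).real s :=
  calc (gaussianReal θ₁ v).real t * (gaussianReal θ₂ v).real s
      ≤ (gaussianReal θ₁ v).real t *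
          (exp (gaussianLogLR v θ₁ θ₂ w) * (gaussianReal θ₁ v).real s) := by
        gcongr; exact gaussianReal_real_le_exp_mul_of_subset_Iic hv h hs hsw
    _ = exp (gaussianLogLR v θ₁ θ₂ w) * (gaussianReal θ₁ v).real t *
          (gaussianReal θ₁ v).real s := by ring
    _ ≤ (gaussianReal θ₂ v).real t * (gaussianReal θ₁ v).real s := by
        gcongr; exact exp_mul_le_gaussianReal_real_of_subset_Ici hv h ht htw

lemma gaussianReal_real_Iic_sub (θ t δ : ℝ) :
    (gaussianReal θ v).real (Iic (t - δ)) = (gaussianReal (θ + δ) v).real (Iic t) := by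
  rw [← gaussianReal_map_add_const δ, map_measureReal_apply (measurable_add_const δ)
    measurableSet_Iic, preimage_add_const_Iic]

lemma gaussianReal_real_pos (θ : ℝ) (hv : v ≠ 0) (hs : volume s ≠ 0) :
    0 < (gaussianReal θ v).real s :=
  ENNReal.toReal_pos (fun h => hs (gaussianReal_absolutelyContinuous' θ hv h)) (measure_ne_top _ _)

end LikelihoodRatio

section Tails

lemma gaussianLogLR_add (θ δ x : ℝ) :
    gaussianLogLR v θ (θ + δ) x = -(δ / v) * θ + δ * (2 * x - δ) / (2 * v) := by
  unfold gaussianLogLR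
  ring

lemma gaussianReal_real_Iic_sub_le (hv : v ≠ 0) (θ t : ℝ) {δ : ℝ} (hδ : 0 ≤ δ) :
    (gaussianReal θ v).real (Iic (t - δ)) ≤
      exp (gaussianLogLR v θ (θ + δ) t) * (gaussianReal θ v).real (Iic t) := by
  rw [gaussianReal_real_Iic_sub]
  exact gaussianReal_real_le_exp_mul_of_subset_Iic hv (by linarith) measurableSet_Iic subset_rfl

lemma exp_mul_le_gaussianReal_real_Iic_sub (hv : v ≠ 0) (θ t : ℝ) {δ : ℝ} (hδ : 0 ≤ δ) :
    exp (gaussianLogLR v θ (θ + δ) (t - 1)) *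
        ((gaussianReal θ v).real (Iic t) - (gaussianReal θ v).real (Iic (t - 1))) ≤
      (gaussianReal θ v).real (Iic (t - δ)) := by
  rw [← measureReal_Ioc_eq_sub (by linarith : t - 1 ≤ t), gaussianReal_real_Iic_sub]
  calc _ ≤ (gaussianReal (θ + δ) v).real (Ioc (t - 1) t) :=
        exp_mul_le_gaussianReal_real_of_subset_Ici hv (by linarith) measurableSet_Ioc
          fun x hx => le_of_lt hx.1
    _ ≤ _ := measureReal_mono Ioc_subset_Iic_self

lemma tendsto_gaussianReal_real_Iic_div_Iic_atTop (hv : v ≠ 0) {s t : ℝ} (hst : s < t) :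
    Tendsto (fun θ => (gaussianReal θ v).real (Iic s) / (gaussianReal θ v).real (Iic t))
      atTop (𝓝 0) := by
  have hδ : 0 < t - s := sub_pos.2 hst
  have hv' : (0 : ℝ) < v := NNReal.coe_pos.2 (pos_iff_ne_zero.2 hv)
  have hLR : Tendsto (fun θ => gaussianLogLR v θ (θ + (t - s)) t) atTop atBot := by
    simp only [gaussianLogLR_add]
    exact tendsto_atBot_add_const_right _ _
      (tendsto_id.const_mul_atTop_of_neg (neg_neg_of_pos (div_pos hδ hv')))
  refine tendsto_of_tendsto_of_tendsto_of_le_of_le tendsto_const_nhds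
    (tendsto_exp_atBot.comp hLR) (fun θ => div_nonneg measureReal_nonneg measureReal_nonneg)
    fun θ => ?_
  rw [Function.comp_apply, div_le_iff₀ (gaussianReal_real_pos θ hv (by simp))]
  simpa using gaussianReal_real_Iic_sub_le hv θ t hδ.le

variable {α : Type*} {l : Filter α} {θ d : α → ℝ} {c : ℝ}

lemma tendsto_gaussianLogLR_add (v : ℝ≥0) (hd : Tendsto d l (𝓝 0))
    (hθd : Tendsto (fun x => θ x * d x) l (𝓝 c)) (y : ℝ) :
    Tendsto (fun x => gaussianLogLR v (θ x) (θ x + d x) y) l (𝓝 (-(c / v))) := by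
  have h := ((hθd.const_mul 2).neg.add ((hd.mul_const (2 * y)).sub (hd.pow 2))).div_const (2 * v)
  convert h using 2 with x
  · unfold gaussianLogLR; ring
  · ring

lemma tendsto_gaussianReal_real_Iic_sub_div_Iic (hv : v ≠ 0) (t : ℝ) (hθ : Tendsto θ l atTop)
    (hd : Tendsto d l (𝓝 0)) (hd0 : ∀ᶠ x in l, 0 ≤ d x)
    (hθd : Tendsto (fun x => θ x * d x) l (𝓝 c)) :
    Tendsto (fun x => (gaussianReal (θ x) v).real (Iic (t - d x)) /
      (gaussianReal (θ x) v).real (Iic t)) l (𝓝 (exp (-(c / v)))) := by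
  have hr : Tendsto (fun x => (gaussianReal (θ x) v).real (Iic (t - 1)) /
      (gaussianReal (θ x) v).real (Iic t)) l (𝓝 0) :=
    (tendsto_gaussianReal_real_Iic_div_Iic_atTop hv (sub_one_lt t)).comp hθ
  have hlower := ((tendsto_gaussianLogLR_add v hd hθd (t - 1)).rexp).mul (hr.const_sub 1)
  rw [sub_zero, mul_one] at hlower
  have hupper := (tendsto_gaussianLogLR_add v hd hθd t).rexp
  refine tendsto_of_tendsto_of_tendsto_of_le_of_le' hlower hupper ?_ ?_ <;>
    filter_upwards [hd0] with x hx <;>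
    have hpos : 0 < (gaussianReal (θ x) v).real (Iic t) := gaussianReal_real_pos _ hv (by simp)
  · rw [le_div_iff₀ hpos, mul_assoc, one_sub_div hpos.ne', div_mul_cancel₀ _ hpos.ne']
    exact exp_mul_le_gaussianReal_real_Iic_sub hv (θ x) t hx
  · rw [div_le_iff₀ hpos]
    exact gaussianReal_real_Iic_sub_le hv (θ x) t hx

end Tails

end ProbabilityTheory

section TruncNormalCDF

variable {ς : ℝ} {T : Set ℝ}

lemma toNNReal_sq_ne_zero (hς : ς ≠ 0) : (ς ^ 2).toNNReal ≠ 0 := by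
  simpa using hς

lemma truncNormalCDF_eq (ς : ℝ) (T : Set ℝ) (θ w : ℝ) :
    truncNormalCDF ς T θ w = (gaussianReal θ (ς ^ 2).toNNReal).real (Iic w ∩ T) /
      (gaussianReal θ (ς ^ 2).toNNReal).real T := rfl

lemma antitone_truncNormalCDF (hς : ς ≠ 0) (hT : MeasurableSet T) (hT0 : volume T ≠ 0) (w : ℝ) :
    Antitone fun θ => truncNormalCDF ς T θ w := by
  intro θ₁ θ₂ h
  have hv := toNNReal_sq_ne_zero hς
  have hsplit θ : (gaussianReal θ (ς ^ 2).toNNReal).real T =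
      (gaussianReal θ (ς ^ 2).toNNReal).real (Iic w ∩ T) +
        (gaussianReal θ (ς ^ 2).toNNReal).real (T \ Iic w) := by
    rw [inter_comm, measureReal_inter_add_sdiff measurableSet_Iic]
  have hMLR := gaussianReal_real_mul_le_mul (w := w) hv h (measurableSet_Iic.inter hT)
    inter_subset_left (hT.diff measurableSet_Iic) fun x hx => mem_Ici.2 (not_le.1 hx.2).le
  simp only [truncNormalCDF_eq]
  rw [div_le_div_iff₀ (gaussianReal_real_pos _ hv hT0) (gaussianReal_real_pos _ hv hT0),
    hsplit θ₁, hsplit θ₂]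
  linarith

lemma tendsto_truncNormalCDF_div_sub (hς : ς ≠ 0) {q t : ℝ} (hqt : q < t) (hqT : Ioo q t ⊆ T)
    (hTt : T ⊆ Iio t) {c : ℝ} (hc : 0 < c) :
    Tendsto (fun w => truncNormalCDF ς T (c / (t - w)) w) (𝓝[<] t) (𝓝 (exp (-(c / ς ^ 2)))) := by
  have hv := toNNReal_sq_ne_zero hς
  have (θ : ℝ) : NullSingletonClass (gaussianReal θ (ς ^ 2).toNNReal) :=
    nullSingletonClass_gaussianReal hv
  have hd : Tendsto (fun w => t - w) (𝓝[<] t) (𝓝 0) :=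
    ((continuous_const.sub continuous_id).tendsto' t 0 (sub_self t)).mono_left nhdsWithin_le_nhds
  have hlt : ∀ᶠ w in 𝓝[<] t, w < t := self_mem_nhdsWithin
  have hθ : Tendsto (fun w => c / (t - w)) (𝓝[<] t) atTop := by
    simp only [div_eq_mul_inv]
    exact (tendsto_inv_nhdsGT_zero.comp (tendsto_nhdsWithin_iff.2
      ⟨hd, hlt.mono fun w hw => sub_pos.2 hw⟩)).const_mul_atTop hc
  have hθd : Tendsto (fun w => c / (t - w) * (t - w)) (𝓝[<] t) (𝓝 c) :=
    tendsto_const_nhds.congr' (hlt.mono fun w hw => (div_mul_cancel₀ c (sub_pos.2 hw).ne').symm)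
  have hw := tendsto_gaussianReal_real_Iic_sub_div_Iic hv t hθ hd
    (hlt.mono fun w hw => (sub_pos.2 hw).le) hθd
  simp only [sub_sub_cancel] at hw
  have hq := (tendsto_gaussianReal_real_Iic_div_Iic_atTop hv hqt).comp hθ
  have hnear : ∀ᶠ w in 𝓝[<] t, w ∈ Ioo q t := Ioo_mem_nhdsLT hqt
  have hA := tendsto_measureReal_div_Iic_of_Ioo_subset (S := fun w => Iic w ∩ T)
    (hnear.mono fun w hw => ⟨hw.1.le, fun x hx => ⟨hx.2.le, hqT ⟨hx.1, hx.2.trans hw.2⟩⟩,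
      inter_subset_left⟩) hw hq
  have hT := tendsto_measureReal_div_Iic_of_Ioo_subset (S := fun _ => T) (s := fun _ => t)
    (Eventually.of_forall fun _ => ⟨hqt.le, hqT, hTt.trans Iio_subset_Iic_self⟩)
    (tendsto_const_nhds.congr fun w => (div_self (gaussianReal_real_pos _ hv (by simp)).ne').symm)
    hq
  rw [← Real.coe_toNNReal _ (sq_nonneg ς), ← div_one (exp _)]
  refine (hA.div hT one_ne_zero).congr fun w => ?_
  rw [Pi.div_apply, truncNormalCDF_eq]
  exact div_div_div_cancel_right₀ (gaussianReal_real_pos _ hv (by simp)).ne' _ _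

end TruncNormalCDF

lemma tendsto_mul_of_antitone_of_tendsto_div {α : Type*} {l : Filter α} {F : ℝ → α → ℝ}
    (hF : ∀ᶠ x in l, Antitone (F · x)) {d Q : α → ℝ} (hd : ∀ᶠ x in l, 0 < d x)
    {g : ℝ → ℝ} (hg : StrictAnti g) {γ L : ℝ} (hL : 0 < L) (hgL : g L = γ)
    (hQ : ∀ᶠ x in l, F (Q x) x = γ)
    (hlim : ∀ c > 0, Tendsto (fun x => F (c / d x) x) l (𝓝 (g c))) :
    Tendsto (fun x => d x * Q x) l (𝓝 L) := by
  rw [tendsto_order]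
  constructor
  · intro a ha
    have hc : 0 < max a (L / 2) := lt_max_of_lt_right (half_pos hL)
    have hcL : γ < g (max a (L / 2)) := hgL ▸ hg (max_lt ha (half_lt_self hL))
    filter_upwards [(hlim _ hc).eventually (lt_mem_nhds hcL), hF, hd, hQ] with x hx hFx hdx hQx
    have := hFx.reflect_lt (hQx.trans_lt hx)
    rw [div_lt_iff₀' hdx] at this
    exact (le_max_left a _).trans_lt this
  · intro a ha
    filter_upwards [(hlim a (hL.trans ha)).eventually (gt_mem_nhds (hgL ▸ hg ha)), hF, hd, hQ]
      with x hx hFx hdx hQx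
    have := hFx.reflect_lt (hx.trans_eq hQx.symm)
    rwa [lt_div_iff₀' hdx] at this

section IntervalUnion

variable {K : ℕ} {a b : ℕ → EReal} {T : Set ℝ}

lemma monotoneOn_of_interlaced (hab : ∀ i < K, a i < b i)
    (hba : ∀ i, i + 1 < K → b i < a (i + 1)) : MonotoneOn b (Iio K) := by
  intro i _ j hj hij
  induction j, hij using Nat.le_induction with
  | base => exact le_rfl
  | succ j _ ih =>
    have hj : j + 1 < K := hj
    exact (ih (by simp; omega)).trans ((hba j hj).trans (hab (j + 1) hj)).le

lemma measurableSet_of_eq_biUnion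
    (hT : T = ⋃ i ∈ Finset.range K, {x : ℝ | a i < (x : EReal) ∧ (x : EReal) < b i}) :
    MeasurableSet T :=
  hT ▸ Finset.measurableSet_biUnion _ fun _ _ =>
    (measurableSet_lt measurable_const measurable_coe_real_ereal).inter
      (measurableSet_lt measurable_coe_real_ereal measurable_const)

lemma subset_Iio_toReal_of_eq_biUnion (hab : ∀ i < K, a i < b i)
    (hba : ∀ i, i + 1 < K → b i < a (i + 1))
    (hT : T = ⋃ i ∈ Finset.range K, {x : ℝ | a i < (x : EReal) ∧ (x : EReal) < b i})
    (hbK : b (K - 1) ≠ ⊤) : T ⊆ Iio (b (K - 1)).toReal := by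
  subst hT
  simp only [Finset.mem_range, subset_def, mem_iUnion, mem_ofPred_eq, mem_Iio]
  rintro x ⟨i, hi, -, hxb⟩
  have hle : b i ≤ b (K - 1) :=
    monotoneOn_of_interlaced hab hba hi (show K - 1 < K by omega) (by omega)
  rw [← EReal.coe_lt_coe_iff, EReal.coe_toReal hbK (hxb.trans_le hle).ne_bot]
  exact hxb.trans_le hle

lemma exists_Ioo_toReal_subset_of_eq_biUnion (hab : ∀ i < K, a i < b i) (hK : 1 ≤ K)
    (hT : T = ⋃ i ∈ Finset.range K, {x : ℝ | a i < (x : EReal) ∧ (x : EReal) < b i})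
    (hbK : b (K - 1) ≠ ⊤) : ∃ p < (b (K - 1)).toReal, Ioo p (b (K - 1)).toReal ⊆ T := by
  have hlast : a (K - 1) < b (K - 1) := hab _ (by omega)
  have hcoe := EReal.coe_toReal hbK hlast.ne_bot
  obtain ⟨p, hap, hpb⟩ := EReal.exists_between_coe_real hlast
  refine ⟨p, by rwa [← EReal.coe_lt_coe_iff, hcoe], fun x ⟨hpx, hxb⟩ => ?_⟩
  rw [← EReal.coe_lt_coe_iff] at hpx hxb
  subst hT
  exact mem_biUnion (Finset.mem_range.2 (by omega)) ⟨hap.trans hpx, hcoe ▸ hxb⟩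

end IntervalUnion

/-- If `b_K < ∞`, then for each `γ ∈ (0,1)`,
`(b_K − w)·Q_γ(w) → −ς²·log γ` as `w` increases to `b_K` along `T`. -/
theorem stmt_6
    (ς : ℝ) (hς : 0 < ς) (K : ℕ) (hK : 1 ≤ K) (a b : ℕ → EReal)
    (hab : ∀ i < K, a i < b i) (hba : ∀ i, i + 1 < K → b i < a (i + 1))
    (T : Set ℝ)
    (hT : T = ⋃ i ∈ Finset.range K, {x : ℝ | a i < (x : EReal) ∧ (x : EReal) < b i})
    (hbK : b (K - 1) ≠ ⊤)
    (γ : ℝ) (hγ : γ ∈ Set.Ioo (0 : ℝ) 1) (Q : ℝ → ℝ)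
    (hQ : ∀ w ∈ T, truncNormalCDF ς T (Q w) w = γ) :
    Tendsto (fun w : ℝ => ((b (K - 1)).toReal - w) * Q w)
      (nhdsWithin ((b (K - 1)).toReal) T) (nhds (-(ς ^ 2 * Real.log γ))) := by
  have hTt := subset_Iio_toReal_of_eq_biUnion hab hba hT hbK
  obtain ⟨p, hpt, hpT⟩ := exists_Ioo_toReal_subset_of_eq_biUnion hab hK hT hbK
  have hT0 : volume T ≠ 0 := ((measure_mono hpT).trans_lt' (by simpa using hpt)).ne'
  have hς2 : 0 < ς ^ 2 := by positivity
  exact tendsto_mul_of_antitone_of_tendsto_div (F := truncNormalCDF ς T)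
    (g := fun c => exp (-(c / ς ^ 2)))
    (Eventually.of_forall (antitone_truncNormalCDF hς.ne' (measurableSet_of_eq_biUnion hT) hT0))
    (eventually_nhdsWithin_of_forall fun w hw => sub_pos.2 (hTt hw))
    (fun x y hxy => exp_lt_exp.2 (neg_lt_neg (div_lt_div_of_pos_right hxy hς2)))
    (neg_pos.2 (mul_neg_of_pos_of_neg hς2 (log_neg hγ.1 hγ.2)))
    (by simp only [neg_div, neg_neg, mul_div_cancel_left₀ _ hς2.ne', exp_log hγ.1])
    (eventually_nhdsWithin_of_forall hQ) fun c hc =>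
      (tendsto_truncNormalCDF_div_sub hς.ne' hpt hpT hTt hc).mono_left (nhdsWithin_mono _ hTt)
end

section
/- For every θ ∈ ℝ and every α ∈ (0,1), if W ~ TN(θ, ς², T), then P(L(W) ≤ θ ≤ U(W)) = 1 − α. -/
open Filter MeasureTheory ProbabilityTheory Set

/-!
The normal family has monotone likelihood ratio: the density of `N(θ₂, ς²)` is that of
`N(θ₁, ς²)` times a function increasing in `x` when `θ₁ < θ₂`. Hence, for `w` in the open set `T`
(so that `T` has mass on both sides of `w`), `θ ↦ F^T_θ(w)` is strictly decreasing, and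
`L(w) ≤ θ ≤ U(w)` iff `α/2 ≤ F^T_θ(w) ≤ 1 - α/2`. Since `F^T_θ` is the continuous cdf of
`W ~ TN(θ, ς², T)`, the variable `F^T_θ(W)` is uniform on `[0, 1]` (probability integral
transform), so this event has probability `1 - α`.
-/

open scoped NNReal

theorem Monotone.exists_preimage_Iic_eq_Iic {α β : Type*} [ConditionallyCompleteLinearOrder α]
    [TopologicalSpace α] [OrderTopology α] [DenselyOrdered α] [LinearOrder β]
    [TopologicalSpace β] [OrderClosedTopology β] {f : α → β} (hf : Monotone f)
    (hfc : Continuous f) {a b : α} {t : β} (ha : f a ≤ t) (hb : t < f b) :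
    ∃ q, f q = t ∧ f ⁻¹' Iic t = Iic q := by
  set S := f ⁻¹' Iic t
  have hbdd : BddAbove S := ⟨b, fun w hw => (hf.reflect_lt (lt_of_le_of_lt hw hb)).le⟩
  have hq : sSup S ∈ S := (isClosed_Iic.preimage hfc).csSup_mem ⟨a, ha⟩ hbdd
  refine ⟨sSup S, le_antisymm hq ?_, Subset.antisymm (fun w hw => le_csSup hbdd hw)
    fun w hw => (hf hw).trans hq⟩
  by_contra! hlt
  obtain ⟨u, ⟨hqu, -⟩, hu⟩ := exists_Ico_subset_of_mem_nhds'
    ((isOpen_Iio.preimage hfc).mem_nhds hlt) (hf.reflect_lt (hlt.trans hb))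
  obtain ⟨w, hqw, hwu⟩ := exists_between hqu
  exact hqw.not_ge (le_csSup hbdd (hu ⟨hqw.le, hwu⟩).le)

theorem Monotone.exists_preimage_Ici_eq_Ici {α β : Type*} [ConditionallyCompleteLinearOrder α]
    [TopologicalSpace α] [OrderTopology α] [DenselyOrdered α] [LinearOrder β]
    [TopologicalSpace β] [OrderClosedTopology β] {f : α → β} (hf : Monotone f)
    (hfc : Continuous f) {a b : α} {t : β} (ha : f a < t) (hb : t ≤ f b) :
    ∃ p, f p = t ∧ f ⁻¹' Ici t = Ici p :=
  hf.dual.exists_preimage_Iic_eq_Iic (α := αᵒᵈ) (β := βᵒᵈ) hfc (a := b) (b := a) hb ha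

theorem ProbabilityTheory.continuous_cdf (ν : Measure ℝ) [IsProbabilityMeasure ν]
    [NullSingletonClass ν] : Continuous (cdf ν) := by
  refine continuous_iff_continuousAt.2 fun a => continuousAt_iff_continuous_left_right.2
    ⟨?_, (cdf ν).right_continuous a⟩
  have h : ENNReal.ofReal (cdf ν a - Function.leftLim (cdf ν) a) = 0 := by
    rw [← StieltjesFunction.measure_singleton, measure_cdf]
    exact measure_singleton a
  rw [ENNReal.ofReal_eq_zero, sub_nonpos] at h
  refine continuousWithinAt_Iio_iff_Iic.1 <|
    (monotone_cdf ν).continuousWithinAt_Iio_iff_leftLim_eq.2 ?_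
  exact le_antisymm ((monotone_cdf ν).leftLim_le le_rfl) h

theorem ProbabilityTheory.measure_cdf_preimage_Icc (ν : Measure ℝ) [IsProbabilityMeasure ν]
    [NullSingletonClass ν] {s t : ℝ} (hs : 0 < s) (hst : s ≤ t) (ht : t < 1) :
    ν (cdf ν ⁻¹' Icc s t) = ENNReal.ofReal (t - s) := by
  obtain ⟨a, ha⟩ := ((tendsto_cdf_atBot ν).eventually (eventually_lt_nhds hs)).exists
  obtain ⟨b, hb⟩ := ((tendsto_cdf_atTop ν).eventually (eventually_gt_nhds ht)).exists
  obtain ⟨p, hp, hpre_p⟩ := (monotone_cdf ν).exists_preimage_Ici_eq_Ici (continuous_cdf ν) ha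
    (hst.trans hb.le)
  obtain ⟨q, hq, hpre_q⟩ := (monotone_cdf ν).exists_preimage_Iic_eq_Iic (continuous_cdf ν)
    ((ha.trans_le hst).le) hb
  rw [← Ici_inter_Iic, preimage_inter, hpre_p, hpre_q, Ici_inter_Iic,
    ← measure_congr Ioc_ae_eq_Icc, ← measure_cdf ν, StieltjesFunction.measure_Ioc, hp, hq]

theorem MeasureTheory.setIntegral_pos_of_forall_pos {X : Type*} [MeasurableSpace X]
    {μ : Measure X} {f : X → ℝ} {s : Set X} (hs : MeasurableSet s) (hf : IntegrableOn f s μ)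
    (hpos : ∀ x ∈ s, 0 < f x) (hμs : 0 < μ s) : 0 < ∫ x in s, f x ∂μ := by
  rw [setIntegral_pos_iff_support_of_nonneg_ae
    ((ae_restrict_iff' hs).2 (ae_of_all _ fun x hx => (hpos x hx).le)) hf]
  rwa [inter_eq_right.2 fun x hx => Function.mem_support.2 (hpos x hx).ne']

theorem mul_setIntegral_lt_of_strictMono_ratio {μ : Measure ℝ} {f g r : ℝ → ℝ}
    (hf : Integrable f μ) (hg : Integrable g μ) (hf_pos : ∀ x, 0 < f x) (hr : StrictMono r)
    (hgf : ∀ x, g x = f x * r x) {A B : Set ℝ} {w : ℝ} (hAm : MeasurableSet A)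
    (hBm : MeasurableSet B) (hAw : ∀ x ∈ A, x ≤ w) (hBw : ∀ x ∈ B, w < x) (hA : 0 < μ A)
    (hB : 0 < μ B) :
    (∫ x in A, g x ∂μ) * ∫ x in B, f x ∂μ < (∫ x in A, f x ∂μ) * ∫ x in B, g x ∂μ := by
  have hgA : ∫ x in A, g x ∂μ ≤ r w * ∫ x in A, f x ∂μ := by
    rw [← integral_const_mul]
    refine setIntegral_mono_on hg.integrableOn (hf.integrableOn.const_mul _) hAm fun x hx => ?_
    rw [hgf, mul_comm]
    exact mul_le_mul_of_nonneg_right (hr.monotone (hAw x hx)) (hf_pos x).le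
  have hgB : r w * ∫ x in B, f x ∂μ < ∫ x in B, g x ∂μ := by
    rw [← sub_pos, ← integral_const_mul, ← integral_sub hg.integrableOn
      (hf.integrableOn.const_mul _)]
    refine setIntegral_pos_of_forall_pos hBm (hg.sub (hf.const_mul _)).integrableOn
      (fun x hx => ?_) hB
    rw [hgf, sub_pos, mul_comm]
    exact mul_lt_mul_of_pos_left (hr (hBw x hx)) (hf_pos x)
  have hfA : 0 < ∫ x in A, f x ∂μ :=
    setIntegral_pos_of_forall_pos hAm hf.integrableOn (fun x _ => hf_pos x) hA
  have hfB : 0 ≤ ∫ x in B, f x ∂μ := setIntegral_nonneg hBm fun x _ => (hf_pos x).le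
  calc (∫ x in A, g x ∂μ) * ∫ x in B, f x ∂μ
      ≤ (r w * ∫ x in A, f x ∂μ) * ∫ x in B, f x ∂μ := mul_le_mul_of_nonneg_right hgA hfB
    _ = (∫ x in A, f x ∂μ) * (r w * ∫ x in B, f x ∂μ) := by ring
    _ < (∫ x in A, f x ∂μ) * ∫ x in B, g x ∂μ := mul_lt_mul_of_pos_left hgB hfA

theorem IsOpen.measure_inter_Iio_pos {μ : Measure ℝ} [μ.IsOpenPosMeasure] {T : Set ℝ}
    (hT : IsOpen T) {w : ℝ} (hw : w ∈ T) : 0 < μ (T ∩ Iio w) := by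
  obtain ⟨x, hxT, hxw⟩ := ((eventually_nhdsWithin_of_eventually_nhds (hT.mem_nhds hw)).and
    (self_mem_nhdsWithin (s := Iio w))).exists
  exact (hT.inter isOpen_Iio).measure_pos μ ⟨x, hxT, hxw⟩

theorem IsOpen.measure_inter_Ioi_pos {μ : Measure ℝ} [μ.IsOpenPosMeasure] {T : Set ℝ}
    (hT : IsOpen T) {w : ℝ} (hw : w ∈ T) : 0 < μ (T ∩ Ioi w) := by
  obtain ⟨x, hxT, hxw⟩ := ((eventually_nhdsWithin_of_eventually_nhds (hT.mem_nhds hw)).and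
    (self_mem_nhdsWithin (s := Ioi w))).exists
  exact (hT.inter isOpen_Ioi).measure_pos μ ⟨x, hxT, hxw⟩

theorem gaussianPDFReal_eq_mul_exp (θ₁ θ₂ : ℝ) (v : ℝ≥0) (x : ℝ) :
    gaussianPDFReal θ₂ v x =
      gaussianPDFReal θ₁ v x * Real.exp ((θ₂ - θ₁) * (2 * x - θ₁ - θ₂) / (2 * v)) := by
  simp only [gaussianPDFReal, mul_assoc, ← Real.exp_add]
  congr 2
  ring

theorem truncNormalCDF_eq_integral {ς : ℝ} (hς : ς ≠ 0) (T : Set ℝ) (θ w : ℝ) :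
    truncNormalCDF ς T θ w =
      (∫ x in T ∩ Iic w, gaussianPDFReal θ (ς ^ 2).toNNReal x) /
        ((∫ x in T ∩ Iic w, gaussianPDFReal θ (ς ^ 2).toNNReal x) +
          ∫ x in T \ Iic w, gaussianPDFReal θ (ς ^ 2).toNNReal x) := by
  have hv : (ς ^ 2).toNNReal ≠ 0 := by simpa using hς
  have hreal : ∀ s, (gaussianReal θ (ς ^ 2).toNNReal s).toReal =
      ∫ x in s, gaussianPDFReal θ (ς ^ 2).toNNReal x := fun s => by
    rw [gaussianReal_apply_eq_integral θ hv, ENNReal.toReal_ofReal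
      (integral_nonneg fun x => gaussianPDFReal_nonneg _ _ x)]
  rw [truncNormalCDF, hreal, hreal, inter_comm, integral_inter_add_sdiff measurableSet_Iic
    (integrable_gaussianPDFReal _ _).integrableOn]

theorem truncNormalCDF_strictAnti {ς : ℝ} (hς : ς ≠ 0) {T : Set ℝ} (hT : IsOpen T) {w : ℝ}
    (hw : w ∈ T) : StrictAnti fun θ => truncNormalCDF ς T θ w := by
  intro θ₁ θ₂ h
  set v := (ς ^ 2).toNNReal
  have hv : v ≠ 0 := by simpa [v] using hς
  set A := T ∩ Iic w
  set B := T \ Iic w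
  have hA : 0 < volume A := (hT.measure_inter_Iio_pos hw).trans_le
    (measure_mono (inter_subset_inter_right _ Iio_subset_Iic_self))
  have hB : 0 < volume B := by
    simpa only [B, sdiff_eq, compl_Iic] using hT.measure_inter_Ioi_pos (μ := volume) hw
  have hAm : MeasurableSet A := hT.measurableSet.inter measurableSet_Iic
  have hBm : MeasurableSet B := hT.measurableSet.diff measurableSet_Iic
  have hratio : StrictMono fun x => Real.exp ((θ₂ - θ₁) * (2 * x - θ₁ - θ₂) / (2 * v)) :=
    Real.exp_strictMono.comp fun x y hxy => by
      have : (0 : ℝ) < v := NNReal.coe_pos.2 (pos_iff_ne_zero.2 hv)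
      gcongr
  have key := mul_setIntegral_lt_of_strictMono_ratio (integrable_gaussianPDFReal θ₁ v)
    (integrable_gaussianPDFReal θ₂ v) (fun x => gaussianPDFReal_pos θ₁ v x hv) hratio
    (gaussianPDFReal_eq_mul_exp θ₁ θ₂ v) hAm hBm (fun x hx => hx.2) (fun x hx => not_le.1 hx.2)
    hA hB
  have hpos : ∀ θ (S : Set ℝ), MeasurableSet S → 0 < volume S →
      0 < ∫ x in S, gaussianPDFReal θ v x := fun θ S hS hvol =>
    setIntegral_pos_of_forall_pos hS (integrable_gaussianPDFReal θ v).integrableOn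
      (fun x _ => gaussianPDFReal_pos θ v x hv) hvol
  dsimp only
  rw [truncNormalCDF_eq_integral hς, truncNormalCDF_eq_integral hς,
    div_lt_div_iff₀ (by linarith [hpos θ₂ A hAm hA, hpos θ₂ B hBm hB])
      (by linarith [hpos θ₁ A hAm hA, hpos θ₁ B hBm hB])]
  linarith

theorem stmt_8_general
    (ς : ℝ) (hς : 0 < ς) (K : ℕ) (hK : 1 ≤ K) (a b : ℕ → EReal)
    (hab : ∀ i < K, a i < b i)
    (T : Set ℝ)
    (hT : T = ⋃ i ∈ Finset.range K, {x : ℝ | a i < (x : EReal) ∧ (x : EReal) < b i})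
    (θ : ℝ) (α : ℝ) (hα : α ∈ Set.Ioo (0 : ℝ) 1) (L U : ℝ → ℝ)
    (hL : ∀ w ∈ T, truncNormalCDF ς T (L w) w = 1 - α / 2)
    (hU : ∀ w ∈ T, truncNormalCDF ς T (U w) w = α / 2) :
    (((gaussianReal θ (Real.toNNReal (ς ^ 2)))[|T])
        {w : ℝ | L w ≤ θ ∧ θ ≤ U w}).toReal = 1 - α := by
  have hv : (ς ^ 2).toNNReal ≠ 0 := by simpa using hς.ne'
  have hTo : IsOpen T := hT ▸ isOpen_biUnion fun i _ =>
    isOpen_Ioo.preimage continuous_coe_real_ereal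
  have hTne : T.Nonempty := by
    obtain ⟨x, hx⟩ := EReal.exists_between_coe_real (hab 0 hK)
    exact ⟨x, hT ▸ mem_biUnion (Finset.mem_range.2 hK) hx⟩
  set μ := gaussianReal θ (ς ^ 2).toNNReal
  have hμT : μ T ≠ 0 := fun h =>
    (hTo.measure_pos volume hTne).ne' (gaussianReal_absolutelyContinuous' θ hv h)
  set ν := μ[|T]
  have := cond_isProbabilityMeasure hμT
  have : NullSingletonClass ν := ⟨fun x =>
    cond_absolutelyContinuous ((nullSingletonClass_gaussianReal hv).measure_singleton x)⟩
  have hcdf : ∀ w, truncNormalCDF ς T θ w = cdf ν w := fun w => by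
    rw [cdf_eq_real, measureReal_def, cond_apply hTo.measurableSet, ENNReal.toReal_mul,
      ENNReal.toReal_inv, truncNormalCDF, inter_comm, div_eq_inv_mul]
  have hevent : T ∩ {w | L w ≤ θ ∧ θ ≤ U w} = T ∩ cdf ν ⁻¹' Icc (α / 2) (1 - α / 2) := by
    ext w
    refine and_congr_right fun hw => ?_
    rw [mem_ofPred_eq, mem_preimage, mem_Icc, ← hcdf, ← hL w hw, ← hU w hw,
      (truncNormalCDF_strictAnti hς.ne' hTo hw).le_iff_ge,
      (truncNormalCDF_strictAnti hς.ne' hTo hw).le_iff_ge, and_comm]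
  rw [← cond_inter_self hTo.measurableSet, hevent, cond_inter_self hTo.measurableSet,
    measure_cdf_preimage_Icc ν (by linarith [hα.1]) (by linarith [hα.2]) (by linarith [hα.1]),
    ENNReal.toReal_ofReal (by linarith [hα.2])]
  ring

/-- For every `θ ∈ ℝ` and `α ∈ (0,1)`: if `W ~ TN(θ, ς², T)` (the normal `N(θ,ς²)`
conditioned on `{V ∈ T}`), then `P(L(W) ≤ θ ≤ U(W)) = 1 − α`, where
`L(w) = Q_{1−α/2}(w)` and `U(w) = Q_{α/2}(w)`. -/
theorem stmt_8
    (ς : ℝ) (hς : 0 < ς) (K : ℕ) (hK : 1 ≤ K) (a b : ℕ → EReal)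
    (hab : ∀ i < K, a i < b i) (hba : ∀ i, i + 1 < K → b i < a (i + 1))
    (T : Set ℝ)
    (hT : T = ⋃ i ∈ Finset.range K, {x : ℝ | a i < (x : EReal) ∧ (x : EReal) < b i})
    (θ : ℝ) (α : ℝ) (hα : α ∈ Set.Ioo (0 : ℝ) 1) (L U : ℝ → ℝ)
    (hL : ∀ w ∈ T, truncNormalCDF ς T (L w) w = 1 - α / 2)
    (hU : ∀ w ∈ T, truncNormalCDF ς T (U w) w = α / 2) :
    (((gaussianReal θ (Real.toNNReal (ς ^ 2)))[|T])
        {w : ℝ | L w ≤ θ ∧ θ ≤ U w}).toReal = 1 - α :=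
  stmt_8_general ς hς K hK a b hab T hT θ α hα L U hL hU
end
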